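/- Let p, p₁, p₂, q, q₁, q₂ : ℝⁿ → [1,∞] be measurable with 1/p = 1/p₁ + 1/p₂ and 1/q = 1/q₁ + 1/q₂ pointwise. Then for sequences (f_j)_j and (g_j)_j of measurable functions, ‖(f_j g_j)_j‖_{ℓ^{q(·)}(L^{p(·)})} ≲ ‖(f_j)_j‖_{ℓ^{q₁(·)}(L^{p₁(·)})} ‖(g_j)_j‖_{ℓ^{q₂(·)}(L^{p₂(·)})}. -/

import Mathlib

open MeasureTheory ENNReal Filter
open scoped SchwartzMap FourierTransform

noncomputable section

/-- Euclidean space ℝⁿ. -/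
abbrev En (n : ℕ) := EuclideanSpace ℝ (Fin n)

/-- `ω_p(t)`: `t^p` for finite `p`; for `p = ∞` it is `0` if `t ≤ 1` and `∞` otherwise. -/
def omegaP (p t : ℝ≥0∞) : ℝ≥0∞ :=
  if p = ∞ then (if t ≤ 1 then 0 else ∞) else t ^ p.toReal

/-- Variable exponent modular `ρ_{p(·)}` on nonnegative (ℝ≥0∞-valued) functions. -/
def rhoP {n : ℕ} (p : En n → ℝ≥0∞) (F : En n → ℝ≥0∞) : ℝ≥0∞ :=
  ∫⁻ x, omegaP (p x) (F x)

/-- Luxemburg norm for the variable exponent Lebesgue space. -/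
def luxNorm {n : ℕ} (p : En n → ℝ≥0∞) (F : En n → ℝ≥0∞) : ℝ≥0∞ :=
  sInf {l : ℝ≥0∞ | 0 < l ∧ rhoP p (fun x => F x / l) ≤ 1}

/-- The nonnegative absolute value of a real function, as an ℝ≥0∞-valued function. -/
def nnAbs {n : ℕ} (f : En n → ℝ) : En n → ℝ≥0∞ := fun x => ENNReal.ofReal |f x|

/-- Modular of the mixed Lebesgue-sequence space `ℓ^{q(·)}(L^{p(·)})`
(convention `λ^{1/∞} = λ^0 = 1`). -/
def mixedModular {n : ℕ} (q p : En n → ℝ≥0∞) (F : ℕ → En n → ℝ≥0∞) : ℝ≥0∞ :=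
  ∑' j, sInf {l : ℝ≥0∞ | 0 < l ∧ rhoP p (fun x => F j x / l ^ ((q x)⁻¹).toReal) ≤ 1}

/-- Quasi-norm of the mixed Lebesgue-sequence space `ℓ^{q(·)}(L^{p(·)})`. -/
def mixedNorm {n : ℕ} (q p : En n → ℝ≥0∞) (F : ℕ → En n → ℝ≥0∞) : ℝ≥0∞ :=
  sInf {m : ℝ≥0∞ | 0 < m ∧ mixedModular q p (fun j x => F j x / m) ≤ 1}

/-- `g` is locally log-Hölder continuous with constant `c`. -/
def LocLogHolder {n : ℕ} (c : ℝ) (g : En n → ℝ) : Prop :=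
  0 < c ∧ ∀ x y : En n, |g x - g y| ≤ c / Real.log (Real.exp 1 + 1 / ‖x - y‖)

/-- `g ∈ C^log_loc(ℝⁿ)`. -/
def ClogLoc {n : ℕ} (g : En n → ℝ) : Prop := ∃ c, LocLogHolder c g

/-- `g` is globally log-Hölder continuous: locally log-Hölder plus the log-Hölder
decay condition at infinity. -/
def GlobLogHolder {n : ℕ} (g : En n → ℝ) : Prop :=
  ClogLoc g ∧ ∃ c g_inf : ℝ, 0 < c ∧ ∀ x : En n, |g x - g_inf| ≤ c / Real.log (Real.exp 1 + ‖x‖)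

/-- A measurable variable exponent `p : ℝⁿ → [1,∞]`. -/
def IsExponent {n : ℕ} (p : En n → ℝ≥0∞) : Prop := Measurable p ∧ ∀ x, 1 ≤ p x

/-- `p ∈ 𝒫^log(ℝⁿ)`: a variable exponent with `1/p` globally log-Hölder continuous. -/
def Plog {n : ℕ} (p : En n → ℝ≥0∞) : Prop :=
  IsExponent p ∧ GlobLogHolder (fun x => ((p x)⁻¹).toReal)

/-- Convolution of two real functions. -/
def conv {n : ℕ} (φ f : En n → ℝ) (x : En n) : ℝ := ∫ y, φ (x - y) * f y

/-- Partial derivative in the `k`-th coordinate direction. -/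
def pderiv {n : ℕ} (k : Fin n) (f : En n → ℝ) (x : En n) : ℝ :=
  fderiv ℝ f x (EuclideanSpace.single k 1)

/-- Besov quasi-norm with variable smoothness and integrability, relative to a
system `(φ_j)_j`. -/
def besovNorm {n : ℕ} (φ : ℕ → En n → ℝ) (s : En n → ℝ) (q p : En n → ℝ≥0∞)
    (g : En n → ℝ) : ℝ≥0∞ :=
  mixedNorm q p (fun j x => ENNReal.ofReal ((2:ℝ) ^ ((j:ℝ) * s x) * |conv (φ j) g x|))

/-- A smooth dyadic resolution of unity `(ℱφ_j)_j`. -/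
structure DyadicResolution (n : ℕ) where
  φ : ℕ → 𝓢(En n, ℝ)
  supp_zero : ∀ ξ : En n, 2 < ‖ξ‖ → 𝓕 (fun y => (φ 0 y : ℂ)) ξ = 0
  supp_pos : ∀ j : ℕ, 0 < j → ∀ ξ : En n,
      (‖ξ‖ < (2:ℝ) ^ ((j:ℤ) - 1) ∨ (2:ℝ) ^ ((j:ℤ) + 1) < ‖ξ‖) →
      𝓕 (fun y => (φ j y : ℂ)) ξ = 0
  sum_one : ∀ ξ : En n, ∑' j, 𝓕 (fun y => (φ j y : ℂ)) ξ = 1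

/-- The commutator `[V·∇, Δ_j]f` relative to a convolution kernel `φj`. -/
def commVf {n : ℕ} (φj : En n → ℝ) (V : Fin n → En n → ℝ) (f : En n → ℝ)
    (x : En n) : ℝ :=
  ∑ k, (V k x * pderiv k (conv φj f) x - conv φj (fun y => V k y * pderiv k f y) x)

end


/-!
Pointwise, `ω_p(uv) ≤ ω_{p₁}(u) + ω_{p₂}(v)` (Young's inequality for finite exponents), which
integrates to `ρ_p(UV/2) ≤ (ρ_{p₁}(U) + ρ_{p₂}(V))/2`. If the sequence modulars of `F` and `G` are
at most `1`, pick admissible scales `a_j` for `F_j` and `b_j` for `G_j` with `∑ a_j, ∑ b_j ≤ 2`.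
Since `a^{1/q₁} b^{1/q₂} ≤ 4 ((a + b)/4)^{1/q}`, the scales `(a_j + b_j)/4` are admissible for
`F_j G_j / 8`, and they sum to at most `1`; rescaling gives the inequality with constant `8`.
When one of the norms on the right vanishes (where `0 · ∞ = 0` would otherwise break the
approximation argument), that sequence vanishes almost everywhere, and so does the product.
-/

lemma ENNReal.toReal_inv_le_one {q : ℝ≥0∞} (hq : 1 ≤ q) : (q⁻¹).toReal ≤ 1 := by
  simpa using ENNReal.toReal_mono ENNReal.one_ne_top (ENNReal.inv_le_one.2 hq)

lemma ENNReal.one_le_of_inv_eq_add {p p₁ p₂ : ℝ≥0∞} (hp : 1 ≤ p) (h : p⁻¹ = p₁⁻¹ + p₂⁻¹) :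
    1 ≤ p₁ ∧ 1 ≤ p₂ := by
  have hinv : p₁⁻¹ + p₂⁻¹ ≤ 1 := h ▸ ENNReal.inv_le_one.2 hp
  exact ⟨ENNReal.inv_le_one.1 (le_self_add.trans hinv),
    ENNReal.inv_le_one.1 (le_add_self.trans hinv)⟩

/-- Young's inequality for the conjugate exponents `r₁/r` and `r₂/r`, applied to `u^r` and `v^r`. -/
lemma ENNReal.mul_rpow_le_rpow_add_rpow {r r₁ r₂ : ℝ} (hr : 0 < r) (hr₁ : 0 < r₁)
    (hr₂ : 0 < r₂) (h : r⁻¹ = r₁⁻¹ + r₂⁻¹) (u v : ℝ≥0∞) :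
    (u * v) ^ r ≤ u ^ r₁ + v ^ r₂ := by
  have hconj : (r₁ / r).HolderConjugate (r₂ / r) := by
    refine Real.holderConjugate_iff.2 ⟨(one_lt_div hr).2 ?_, ?_⟩
    · have : r₁⁻¹ < r⁻¹ := by rw [h]; linarith [inv_pos.2 hr₂]
      exact (inv_lt_inv₀ hr₁ hr).1 this
    · rw [inv_div, inv_div, div_eq_mul_inv, div_eq_mul_inv, ← mul_add, ← h,
        mul_inv_cancel₀ hr.ne']
  have hpow (w : ℝ≥0∞) (s : ℝ) : (w ^ r) ^ (s / r) = w ^ s := by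
    rw [← ENNReal.rpow_mul, mul_div_cancel₀ _ hr.ne']
  calc (u * v) ^ r = u ^ r * v ^ r := ENNReal.mul_rpow_of_nonneg u v hr.le
    _ ≤ u ^ r₁ / ENNReal.ofReal (r₁ / r) + v ^ r₂ / ENNReal.ofReal (r₂ / r) := by
        simpa only [hpow] using ENNReal.young_inequality (u ^ r) (v ^ r) hconj
    _ ≤ u ^ r₁ + v ^ r₂ := by
        gcongr
        · exact ENNReal.div_le_of_le_mul
            (le_mul_of_one_le_right' (ENNReal.one_le_ofReal.2 hconj.lt.le))
        · exact ENNReal.div_le_of_le_mul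
            (le_mul_of_one_le_right' (ENNReal.one_le_ofReal.2 hconj.symm.lt.le))

lemma ENNReal.exists_mem_tsum_le_tsum_sInf_add {ι : Type*} [Countable ι] {S : ι → Set ℝ≥0∞}
    (hS : ∑' i, sInf (S i) ≠ ∞) {ε : ℝ≥0∞} (hε : ε ≠ 0) :
    ∃ a : ι → ℝ≥0∞, (∀ i, a i ∈ S i) ∧ ∑' i, a i ≤ ∑' i, sInf (S i) + ε := by
  obtain ⟨δ, hδ, hδε⟩ := ENNReal.exists_pos_sum_of_countable' hε ι
  have hlt (i : ι) : sInf (S i) < sInf (S i) + δ i :=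
    ENNReal.lt_add_right (ENNReal.ne_top_of_tsum_ne_top hS i) (hδ i).ne'
  choose a haS hlt using fun i => sInf_lt_iff.1 (hlt i)
  refine ⟨a, haS, ?_⟩
  calc ∑' i, a i ≤ ∑' i, (sInf (S i) + δ i) := ENNReal.tsum_le_tsum fun i => (hlt i).le
    _ = ∑' i, sInf (S i) + ∑' i, δ i := ENNReal.tsum_add
    _ ≤ ∑' i, sInf (S i) + ε := by gcongr

lemma ENNReal.sInf_eq_zero_of_forall_pos_mem {S : Set ℝ≥0∞} (h : ∀ l, 0 < l → l ∈ S) :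
    sInf S = 0 :=
  nonpos_iff_eq_zero.1 <| le_of_forall_gt_imp_ge_of_dense fun l hl => sInf_le (h l hl)

lemma omegaP_mono (p : ℝ≥0∞) {t t' : ℝ≥0∞} (h : t ≤ t') : omegaP p t ≤ omegaP p t' := by
  unfold omegaP
  split_ifs with hp ht ht' ht'
  · exact le_rfl
  · exact le_top
  · exact absurd (h.trans ht') ht
  · exact le_rfl
  · exact ENNReal.rpow_le_rpow h ENNReal.toReal_nonneg

lemma omegaP_zero {p : ℝ≥0∞} (hp : p ≠ 0) : omegaP p 0 = 0 := by
  unfold omegaP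
  split_ifs with htop h
  · rfl
  · exact absurd zero_le_one h
  · exact ENNReal.zero_rpow_of_pos (ENNReal.toReal_pos hp htop)

lemma le_omegaP {p t : ℝ≥0∞} (hp : 1 ≤ p) (ht : 1 < t) : t ≤ omegaP p t := by
  unfold omegaP
  split_ifs with htop h
  · exact absurd h ht.not_ge
  · exact le_top
  · calc t = t ^ (1 : ℝ) := (ENNReal.rpow_one t).symm
      _ ≤ t ^ p.toReal := ENNReal.rpow_le_rpow_of_exponent_le ht.le <| by
          simpa using ENNReal.toReal_mono htop hp

lemma omegaP_div_two_le {p : ℝ≥0∞} (hp : 1 ≤ p) (t : ℝ≥0∞) :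
    omegaP p (t / 2) ≤ omegaP p t / 2 := by
  unfold omegaP
  split_ifs with htop h h' h'
  · exact zero_le
  · exact zero_le
  · exact absurd (ENNReal.half_le_self.trans h') h
  · rw [ENNReal.top_div_of_ne_top ENNReal.ofNat_ne_top]
  · rw [ENNReal.div_rpow_of_nonneg t 2 ENNReal.toReal_nonneg]
    refine ENNReal.div_le_div_left ?_ _
    calc (2 : ℝ≥0∞) = 2 ^ (1 : ℝ) := (ENNReal.rpow_one 2).symm
      _ ≤ 2 ^ p.toReal := ENNReal.rpow_le_rpow_of_exponent_le one_le_two <| by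
          simpa using ENNReal.toReal_mono htop hp

lemma omegaP_top_mul_le (p u v : ℝ≥0∞) : omegaP p (u * v) ≤ omegaP ∞ u + omegaP p v := by
  by_cases hu : u ≤ 1
  · calc omegaP p (u * v) ≤ omegaP p v := omegaP_mono p (mul_le_of_le_one_left' hu)
      _ ≤ omegaP ∞ u + omegaP p v := le_add_self
  · simp [omegaP, hu]

lemma omegaP_mul_le {p p₁ p₂ : ℝ≥0∞} (hp₁ : p₁ ≠ 0) (hp₂ : p₂ ≠ 0) (h : p⁻¹ = p₁⁻¹ + p₂⁻¹)
    (u v : ℝ≥0∞) : omegaP p (u * v) ≤ omegaP p₁ u + omegaP p₂ v := by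
  rcases eq_or_ne p₁ ∞ with rfl | h₁
  · obtain rfl : p = p₂ := by simpa using h
    exact omegaP_top_mul_le p u v
  rcases eq_or_ne p₂ ∞ with rfl | h₂
  · obtain rfl : p = p₁ := by simpa using h
    rw [mul_comm, add_comm]
    exact omegaP_top_mul_le p v u
  have hp : p ≠ ∞ := by
    rintro rfl
    rw [ENNReal.inv_top, eq_comm, add_eq_zero, ENNReal.inv_eq_zero] at h
    exact h₁ h.1
  have hp0 : p ≠ 0 := by
    rintro rfl
    rw [ENNReal.inv_zero, eq_comm, ENNReal.add_eq_top, ENNReal.inv_eq_top,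
      ENNReal.inv_eq_top] at h
    exact h.elim hp₁ hp₂
  have hreal : p.toReal⁻¹ = p₁.toReal⁻¹ + p₂.toReal⁻¹ := by
    rw [← ENNReal.toReal_inv, ← ENNReal.toReal_inv, ← ENNReal.toReal_inv, h,
      ENNReal.toReal_add (ENNReal.inv_ne_top.2 hp₁) (ENNReal.inv_ne_top.2 hp₂)]
  simp only [omegaP, hp, h₁, h₂, if_false]
  exact ENNReal.mul_rpow_le_rpow_add_rpow (ENNReal.toReal_pos hp0 hp)
    (ENNReal.toReal_pos hp₁ h₁) (ENNReal.toReal_pos hp₂ h₂) hreal u v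

lemma measurable_omegaP {α : Type*} [MeasurableSpace α] {p t : α → ℝ≥0∞}
    (hp : Measurable p) (ht : Measurable t) : Measurable fun x => omegaP (p x) (t x) :=
  Measurable.ite (hp (measurableSet_singleton ∞))
    (Measurable.ite (ht measurableSet_Iic) measurable_const measurable_const)
    (ht.pow hp.ennreal_toReal)

lemma rhoP_mono {n : ℕ} (p : En n → ℝ≥0∞) {F G : En n → ℝ≥0∞} (h : ∀ x, F x ≤ G x) :
    rhoP p F ≤ rhoP p G :=
  lintegral_mono fun x => omegaP_mono (p x) (h x)

lemma rhoP_mul_div_two_le {n : ℕ} {p p₁ p₂ : En n → ℝ≥0∞} (hp : ∀ x, 1 ≤ p x)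
    (hps : ∀ x, (p x)⁻¹ = (p₁ x)⁻¹ + (p₂ x)⁻¹)
    {U V : En n → ℝ≥0∞} (hU : Measurable fun x => omegaP (p₁ x) (U x)) :
    rhoP p (fun x => U x * V x / 2) ≤ (rhoP p₁ U + rhoP p₂ V) / 2 := by
  have hp₁₂ (x : En n) := one_le_of_inv_eq_add (hp x) (hps x)
  calc rhoP p (fun x => U x * V x / 2)
      ≤ ∫⁻ x, (omegaP (p₁ x) (U x) + omegaP (p₂ x) (V x)) / 2 := lintegral_mono fun x =>
        (omegaP_div_two_le (hp x) _).trans <|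
          ENNReal.div_le_div_right (omegaP_mul_le (one_pos.trans_le (hp₁₂ x).1).ne'
            (one_pos.trans_le (hp₁₂ x).2).ne' (hps x) _ _) 2
    _ = (rhoP p₁ U + rhoP p₂ V) / 2 := by
        simp_rw [div_eq_mul_inv]
        rw [lintegral_mul_const' _ _ (by norm_num), lintegral_add_left hU]
        rfl

lemma div_eight_div_rpow_le {a b : ℝ≥0∞} (ha : 0 < a) (hb : 0 < b) {e₁ e₂ : ℝ}
    (he₁ : 0 ≤ e₁) (he₂ : 0 ≤ e₂) (he : e₁ + e₂ ≤ 1) (s t : ℝ≥0∞) :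
    s * t / 8 / ((a + b) / 4) ^ (e₁ + e₂) ≤ s / a ^ e₁ * (t / b ^ e₂) / 2 := by
  set D := ((a + b) / 4) ^ (e₁ + e₂)
  have hAB : a ^ e₁ * b ^ e₂ ≤ 4 * D :=
    calc a ^ e₁ * b ^ e₂ ≤ (a + b) ^ e₁ * (a + b) ^ e₂ :=
          mul_le_mul' (ENNReal.rpow_le_rpow le_self_add he₁) (ENNReal.rpow_le_rpow le_add_self he₂)
      _ = (4 * ((a + b) / 4)) ^ (e₁ + e₂) := by
          rw [ENNReal.mul_div_cancel (by norm_num) (by norm_num),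
            ENNReal.rpow_add_of_nonneg _ _ he₁ he₂]
      _ = 4 ^ (e₁ + e₂) * D := ENNReal.mul_rpow_of_nonneg _ _ (add_nonneg he₁ he₂)
      _ ≤ 4 ^ (1 : ℝ) * D := by gcongr; norm_num
      _ = 4 * D := by rw [ENNReal.rpow_one]
  have hinv : (4 * D)⁻¹ ≤ (a ^ e₁)⁻¹ * (b ^ e₂)⁻¹ := by
    rw [← ENNReal.mul_inv (Or.inl (ENNReal.rpow_pos_of_nonneg ha he₁).ne')
      (Or.inr (ENNReal.rpow_pos_of_nonneg hb he₂).ne')]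
    exact ENNReal.inv_le_inv.2 hAB
  have h8 : (8 : ℝ≥0∞)⁻¹ = 2⁻¹ * 4⁻¹ := by
    rw [← ENNReal.mul_inv (by norm_num) (by norm_num)]
    norm_num
  calc s * t / 8 / D = s * t * 2⁻¹ * (4 * D)⁻¹ := by
        rw [ENNReal.mul_inv (by norm_num) (by norm_num)]
        simp only [div_eq_mul_inv, h8]
        ring
    _ ≤ s * t * 2⁻¹ * ((a ^ e₁)⁻¹ * (b ^ e₂)⁻¹) := by gcongr
    _ = s / a ^ e₁ * (t / b ^ e₂) / 2 := by
        simp only [div_eq_mul_inv]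
        ring

def admissibleScales {n : ℕ} (q p : En n → ℝ≥0∞) (F : En n → ℝ≥0∞) : Set ℝ≥0∞ :=
  {l | 0 < l ∧ rhoP p (fun x => F x / l ^ ((q x)⁻¹).toReal) ≤ 1}

lemma mixedModular_eq_tsum_sInf {n : ℕ} (q p : En n → ℝ≥0∞) (F : ℕ → En n → ℝ≥0∞) :
    mixedModular q p F = ∑' j, sInf (admissibleScales q p (F j)) :=
  rfl

lemma add_div_four_mem_admissibleScales {n : ℕ} {p p₁ p₂ q q₁ q₂ : En n → ℝ≥0∞}
    (hp : ∀ x, 1 ≤ p x) (hps : ∀ x, (p x)⁻¹ = (p₁ x)⁻¹ + (p₂ x)⁻¹) (hq : ∀ x, 1 ≤ q x)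
    (hqs : ∀ x, (q x)⁻¹ = (q₁ x)⁻¹ + (q₂ x)⁻¹)
    (hp₁m : Measurable p₁) (hq₁m : Measurable q₁) {F G : En n → ℝ≥0∞} (hF : Measurable F)
    {a b : ℝ≥0∞} (ha : a ∈ admissibleScales q₁ p₁ F) (hb : b ∈ admissibleScales q₂ p₂ G) :
    (a + b) / 4 ∈ admissibleScales q p (fun x => F x * G x / 8) := by
  have hexp (x : En n) : ((q x)⁻¹).toReal = ((q₁ x)⁻¹).toReal + ((q₂ x)⁻¹).toReal := by
    have hq₁₂ := one_le_of_inv_eq_add (hq x) (hqs x)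
    rw [hqs x, ENNReal.toReal_add (ENNReal.inv_ne_top.2 (one_pos.trans_le hq₁₂.1).ne')
      (ENNReal.inv_ne_top.2 (one_pos.trans_le hq₁₂.2).ne')]
  have hU : Measurable fun x => omegaP (p₁ x) (F x / a ^ ((q₁ x)⁻¹).toReal) :=
    measurable_omegaP hp₁m (hF.div (measurable_const.pow hq₁m.inv.ennreal_toReal))
  refine ⟨ENNReal.div_pos (ha.1.trans_le le_self_add).ne' ENNReal.ofNat_ne_top, ?_⟩
  calc rhoP p (fun x => F x * G x / 8 / ((a + b) / 4) ^ ((q x)⁻¹).toReal)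
      ≤ rhoP p (fun x => F x / a ^ ((q₁ x)⁻¹).toReal * (G x / b ^ ((q₂ x)⁻¹).toReal) / 2) :=
        rhoP_mono p fun x => by
          rw [hexp x]
          exact div_eight_div_rpow_le ha.1 hb.1 ENNReal.toReal_nonneg ENNReal.toReal_nonneg
            (hexp x ▸ toReal_inv_le_one (hq x)) _ _
    _ ≤ (1 + 1) / 2 := (rhoP_mul_div_two_le hp hps hU).trans (by gcongr; exacts [ha.2, hb.2])
    _ = 1 := by rw [one_add_one_eq_two, ENNReal.div_self two_ne_zero ENNReal.ofNat_ne_top]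

lemma mixedModular_mul_div_eight_le_one {n : ℕ} {p p₁ p₂ q q₁ q₂ : En n → ℝ≥0∞}
    (hp : ∀ x, 1 ≤ p x) (hps : ∀ x, (p x)⁻¹ = (p₁ x)⁻¹ + (p₂ x)⁻¹) (hq : ∀ x, 1 ≤ q x)
    (hqs : ∀ x, (q x)⁻¹ = (q₁ x)⁻¹ + (q₂ x)⁻¹)
    (hp₁m : Measurable p₁) (hq₁m : Measurable q₁) {F G : ℕ → En n → ℝ≥0∞}
    (hF : ∀ j, Measurable (F j))
    (hFle : mixedModular q₁ p₁ F ≤ 1) (hGle : mixedModular q₂ p₂ G ≤ 1) :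
    mixedModular q p (fun j x => F j x * G j x / 8) ≤ 1 := by
  rw [mixedModular_eq_tsum_sInf] at hFle hGle ⊢
  obtain ⟨a, ha, hasum⟩ := exists_mem_tsum_le_tsum_sInf_add
    (ne_top_of_le_ne_top ENNReal.one_ne_top hFle) one_ne_zero
  obtain ⟨b, hb, hbsum⟩ := exists_mem_tsum_le_tsum_sInf_add
    (ne_top_of_le_ne_top ENNReal.one_ne_top hGle) one_ne_zero
  calc ∑' j, sInf (admissibleScales q p fun x => F j x * G j x / 8)
      ≤ ∑' j, (a j + b j) / 4 := ENNReal.tsum_le_tsum fun j => sInf_le <|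
        add_div_four_mem_admissibleScales hp hps hq hqs hp₁m hq₁m (hF j) (ha j) (hb j)
    _ = (∑' j, a j + ∑' j, b j) / 4 := by
        simp_rw [div_eq_mul_inv]
        rw [ENNReal.tsum_mul_right, ENNReal.tsum_add]
    _ ≤ ((1 + 1) + (1 + 1)) / 4 := by
        gcongr
        exacts [hasum.trans (by gcongr), hbsum.trans (by gcongr)]
    _ = 1 := by
        rw [show (1 + 1 + (1 + 1) : ℝ≥0∞) = 4 by norm_num]
        exact ENNReal.div_self (by norm_num) (by norm_num)

lemma mixedNorm_mul_le {n : ℕ} {p p₁ p₂ q q₁ q₂ : En n → ℝ≥0∞}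
    (hp : ∀ x, 1 ≤ p x) (hps : ∀ x, (p x)⁻¹ = (p₁ x)⁻¹ + (p₂ x)⁻¹) (hq : ∀ x, 1 ≤ q x)
    (hqs : ∀ x, (q x)⁻¹ = (q₁ x)⁻¹ + (q₂ x)⁻¹)
    (hp₁m : Measurable p₁) (hq₁m : Measurable q₁) {F G : ℕ → En n → ℝ≥0∞}
    (hF : ∀ j, Measurable (F j))
    {m m' : ℝ≥0∞} (hm : 0 < m) (hmt : m ≠ ∞) (hm' : 0 < m') (hm't : m' ≠ ∞)
    (hFm : mixedModular q₁ p₁ (fun j x => F j x / m) ≤ 1)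
    (hGm : mixedModular q₂ p₂ (fun j x => G j x / m') ≤ 1) :
    mixedNorm q p (fun j x => F j x * G j x) ≤ 8 * m * m' := by
  refine sInf_le ⟨by positivity, ?_⟩
  have hsplit : (fun j x => F j x * G j x / (8 * m * m')) =
      fun j x => F j x / m * (G j x / m') / 8 := by
    funext j x
    simp only [div_eq_mul_inv]
    rw [ENNReal.mul_inv (Or.inr hm't) (Or.inr hm'.ne'),
      ENNReal.mul_inv (Or.inr hmt) (Or.inr hm.ne')]
    ring
  rw [hsplit]
  exact mixedModular_mul_div_eight_le_one hp hps hq hqs hp₁m hq₁m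
    (fun j => (hF j).div_const m) hFm hGm

lemma mixedNorm_mul_le_of_ne_zero {n : ℕ} {p p₁ p₂ q q₁ q₂ : En n → ℝ≥0∞}
    (hp : ∀ x, 1 ≤ p x) (hps : ∀ x, (p x)⁻¹ = (p₁ x)⁻¹ + (p₂ x)⁻¹) (hq : ∀ x, 1 ≤ q x)
    (hqs : ∀ x, (q x)⁻¹ = (q₁ x)⁻¹ + (q₂ x)⁻¹)
    (hp₁m : Measurable p₁) (hq₁m : Measurable q₁) {F G : ℕ → En n → ℝ≥0∞}
    (hF : ∀ j, Measurable (F j))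
    (h₁ : mixedNorm q₁ p₁ F ≠ 0) (h₂ : mixedNorm q₂ p₂ G ≠ 0) :
    mixedNorm q p (fun j x => F j x * G j x) ≤
      8 * mixedNorm q₁ p₁ F * mixedNorm q₂ p₂ G := by
  rw [mul_assoc, mul_comm, ← ENNReal.div_le_iff (by norm_num) (by norm_num)]
  refine ENNReal.le_mul_of_forall_lt (Or.inl h₁) (Or.inr h₂) fun c hc d hd => ?_
  obtain ⟨m, ⟨hm, hFm⟩, hmc⟩ := sInf_lt_iff.1 hc
  obtain ⟨m', ⟨hm', hGm⟩, hm'd⟩ := sInf_lt_iff.1 hd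
  rw [ENNReal.div_le_iff (by norm_num) (by norm_num)]
  calc mixedNorm q p (fun j x => F j x * G j x)
      ≤ 8 * m * m' := mixedNorm_mul_le hp hps hq hqs hp₁m hq₁m hF
        hm hmc.ne_top hm' hm'd.ne_top hFm hGm
    _ ≤ c * d * 8 := by
        rw [mul_assoc, mul_comm]
        gcongr

lemma mixedNorm_eq_zero_of_ae_eq_zero {n : ℕ} (q : En n → ℝ≥0∞) {p : En n → ℝ≥0∞}
    (hp : ∀ x, p x ≠ 0) {F : ℕ → En n → ℝ≥0∞} (hF : ∀ j, F j =ᵐ[volume] 0) :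
    mixedNorm q p F = 0 := by
  refine sInf_eq_zero_of_forall_pos_mem fun m hm => ⟨hm, ?_⟩
  have hρ (j : ℕ) (l : ℝ≥0∞) : rhoP p (fun x => F j x / m / l ^ ((q x)⁻¹).toReal) = 0 := by
    refine (lintegral_congr_ae ((hF j).mono fun x hx => ?_)).trans lintegral_zero
    simp [hx, omegaP_zero (hp x)]
  have hterm (j : ℕ) : sInf (admissibleScales q p fun x => F j x / m) = 0 :=
    sInf_eq_zero_of_forall_pos_mem fun l hl => ⟨hl, (hρ j l).trans_le zero_le_one⟩
  simp [mixedModular_eq_tsum_sInf, hterm]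

lemma rhoP_div_le_one_of_mixedNorm_eq_zero {n : ℕ} {q p : En n → ℝ≥0∞} (hq : ∀ x, 1 ≤ q x)
    {F : ℕ → En n → ℝ≥0∞} (h : mixedNorm q p F = 0) (j : ℕ) {t : ℝ≥0∞} (ht : 0 < t) :
    rhoP p (fun x => F j x / t) ≤ 1 := by
  obtain ⟨m, ⟨hm, hmod⟩, hmt⟩ :=
    sInf_lt_iff.1 (h.trans_lt (ENNReal.half_pos ht.ne') : mixedNorm q p F < t / 2)
  have hterm : sInf (admissibleScales q p fun x => F j x / m) < 2 :=
    ((ENNReal.le_tsum j).trans hmod).trans_lt one_lt_two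
  obtain ⟨l, ⟨hl, hρ⟩, hl2⟩ := sInf_lt_iff.1 hterm
  refine (rhoP_mono p fun x => ?_).trans hρ
  have hle : m * l ^ ((q x)⁻¹).toReal ≤ t :=
    calc m * l ^ ((q x)⁻¹).toReal ≤ t / 2 * 2 ^ (1 : ℝ) := by
          gcongr
          calc l ^ ((q x)⁻¹).toReal ≤ 2 ^ ((q x)⁻¹).toReal :=
                ENNReal.rpow_le_rpow hl2.le ENNReal.toReal_nonneg
            _ ≤ 2 ^ (1 : ℝ) :=
                ENNReal.rpow_le_rpow_of_exponent_le one_le_two (toReal_inv_le_one (hq x))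
      _ = t := by rw [ENNReal.rpow_one, ENNReal.div_mul_cancel two_ne_zero ENNReal.ofNat_ne_top]
  have hpos : l ^ ((q x)⁻¹).toReal ≠ 0 := (ENNReal.rpow_pos_of_nonneg hl ENNReal.toReal_nonneg).ne'
  dsimp only
  rw [div_eq_mul_inv, div_eq_mul_inv, div_eq_mul_inv, mul_assoc,
    ← ENNReal.mul_inv (Or.inl hm.ne') (Or.inr hpos)]
  gcongr

lemma volume_setOf_le_eq_zero_of_forall_rhoP_div_le_one {n : ℕ} {p : En n → ℝ≥0∞}
    (hp : ∀ x, 1 ≤ p x) {F : En n → ℝ≥0∞} (hF : Measurable F)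
    (h : ∀ t, 0 < t → rhoP p (fun x => F x / t) ≤ 1) {c : ℝ≥0∞} (hc : c ≠ 0) (hct : c ≠ ∞) :
    volume {x | c ≤ F x} = 0 := by
  have hE : MeasurableSet {x | c ≤ F x} := hF measurableSet_Ici
  have hsmall (s : ℝ≥0∞) (hs : 0 < s) (hs1 : s < 1) : volume {x | c ≤ F x} ≤ s := by
    have hst : s ≠ ∞ := (hs1.trans ENNReal.one_lt_top).ne
    have hmarkov : s⁻¹ * volume {x | c ≤ F x} ≤ 1 :=
      calc s⁻¹ * volume {x | c ≤ F x} = ∫⁻ _ in {x | c ≤ F x}, s⁻¹ :=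
            (setLIntegral_const _ _).symm
        _ ≤ ∫⁻ x in {x | c ≤ F x}, omegaP (p x) (F x / (c * s)) :=
            setLIntegral_mono' hE fun x hx => by
              refine (le_omegaP (hp x) (ENNReal.one_lt_inv.2 hs1)).trans (omegaP_mono _ ?_)
              rw [ENNReal.le_div_iff_mul_le (Or.inl (by positivity)) (Or.inl (by finiteness)),
                mul_comm c, ← mul_assoc, ENNReal.inv_mul_cancel hs.ne' hst, one_mul]
              exact hx
        _ ≤ rhoP p (fun x => F x / (c * s)) := setLIntegral_le_lintegral _ _
        _ ≤ 1 := h _ (by positivity)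
    simpa using (ENNReal.mul_le_iff_le_inv (ENNReal.inv_ne_zero.2 hst)
      (ENNReal.inv_ne_top.2 hs.ne')).1 hmarkov
  exact nonpos_iff_eq_zero.1 <| le_of_forall_gt_imp_ge_of_dense fun s hs =>
    (hsmall (min s 2⁻¹) (lt_min hs (by norm_num)) (min_lt_of_right_lt (by norm_num))).trans
      (min_le_left _ _)

lemma ae_eq_zero_of_forall_rhoP_div_le_one {n : ℕ} {p : En n → ℝ≥0∞} (hp : ∀ x, 1 ≤ p x)
    {F : En n → ℝ≥0∞} (hF : Measurable F) (h : ∀ t, 0 < t → rhoP p (fun x => F x / t) ≤ 1) :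
    F =ᵐ[volume] 0 := by
  have hsub : {x | F x ≠ 0} ⊆ ⋃ k : ℕ, {x | ((k : ℝ≥0∞) + 1)⁻¹ ≤ F x} := fun x hx => by
    obtain ⟨k, hk⟩ := ENNReal.exists_inv_nat_lt hx
    exact Set.mem_iUnion.2 ⟨k, (ENNReal.inv_le_inv.2 le_self_add).trans hk.le⟩
  exact ae_iff.2 <| measure_mono_null hsub <| measure_iUnion_null fun _ =>
    volume_setOf_le_eq_zero_of_forall_rhoP_div_le_one hp hF h (by simp) (by simp)

lemma ae_eq_zero_of_mixedNorm_eq_zero {n : ℕ} {q p : En n → ℝ≥0∞} (hq : ∀ x, 1 ≤ q x)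
    (hp : ∀ x, 1 ≤ p x) {F : ℕ → En n → ℝ≥0∞} (hF : ∀ j, Measurable (F j))
    (h : mixedNorm q p F = 0) (j : ℕ) : F j =ᵐ[volume] 0 :=
  ae_eq_zero_of_forall_rhoP_div_le_one hp (hF j) fun _ ht =>
    rhoP_div_le_one_of_mixedNorm_eq_zero hq h j ht

/-- generalized Hölder inequality in mixed Lebesgue-sequence spaces. -/
theorem stmt9 {n : ℕ} (p p₁ p₂ q q₁ q₂ : En n → ℝ≥0∞)
    (hp : IsExponent p) (hp₁ : IsExponent p₁) (hp₂ : IsExponent p₂)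
    (hq : IsExponent q) (hq₁ : IsExponent q₁) (hq₂ : IsExponent q₂)
    (hps : ∀ x, (p x)⁻¹ = (p₁ x)⁻¹ + (p₂ x)⁻¹)
    (hqs : ∀ x, (q x)⁻¹ = (q₁ x)⁻¹ + (q₂ x)⁻¹) :
    ∃ c : ℝ≥0∞, c ≠ ∞ ∧ ∀ f g : ℕ → En n → ℝ,
      (∀ j, Measurable (f j)) → (∀ j, Measurable (g j)) →
      mixedNorm q p (fun j x => ENNReal.ofReal |f j x * g j x|) ≤
        c * mixedNorm q₁ p₁ (fun j => nnAbs (f j)) * mixedNorm q₂ p₂ (fun j => nnAbs (g j)) := by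
  refine ⟨8, by norm_num, fun f g hf hg => ?_⟩
  have hfm (j : ℕ) : Measurable (nnAbs (f j)) := (hf j).abs.ennreal_ofReal
  have hgm (j : ℕ) : Measurable (nnAbs (g j)) := (hg j).abs.ennreal_ofReal
  have hprod : (fun j x => ENNReal.ofReal |f j x * g j x|) =
      fun j x => nnAbs (f j) x * nnAbs (g j) x := by
    funext j x
    rw [abs_mul, ENNReal.ofReal_mul (abs_nonneg _)]
    rfl
  have hp0 (x : En n) : p x ≠ 0 := (one_pos.trans_le (hp.2 x)).ne'
  rw [hprod]
  by_cases h₁ : mixedNorm q₁ p₁ (fun j => nnAbs (f j)) = 0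
  · rw [mixedNorm_eq_zero_of_ae_eq_zero q hp0 fun j =>
      (ae_eq_zero_of_mixedNorm_eq_zero hq₁.2 hp₁.2 hfm h₁ j).mono fun x hx => by simp [hx]]
    exact zero_le
  by_cases h₂ : mixedNorm q₂ p₂ (fun j => nnAbs (g j)) = 0
  · rw [mixedNorm_eq_zero_of_ae_eq_zero q hp0 fun j =>
      (ae_eq_zero_of_mixedNorm_eq_zero hq₂.2 hp₂.2 hgm h₂ j).mono fun x hx => by simp [hx]]
    exact zero_le
  exact mixedNorm_mul_le_of_ne_zero hp.2 hps hq.2 hqs hp₁.1 hq₁.1 hfm h₁ h₂
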